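/- arXiv:2311.17215 — 2 statements merged into one kernel-verified Lean document; each statement's English description precedes it below -/
import Mathlib

section
/- Let p be an odd prime with p ≡ 2 (mod 3). Then the second moment of the family y² = x³ + x + T³ equals p² + p; that is, Σ_{t=0}^{p−1} ( Σ_{x=0}^{p−1} ((x³ + x + t³)/p) )² = p² + p. -/
/-!
Let `χ` be the quadratic character of `𝔽_p`. As `3 ∤ p - 1`, `t ↦ t³` permutes `𝔽_p`, so
the moment is `∑_t (∑_x χ(x³ + x + t))²`. Expanding the square and using
`∑_t χ((t + a)(t + b)) = p [a = b] - 1` (a Jacobi sum) turns it into `p N - p²`, where `N`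
counts the pairs with `x³ + x = y³ + y`. For fixed `x` these are `y = x` and the roots of
`(2y + x)² = -3x² - 4`, which are distinct since `-3` is a nonsquare; hence
`N = 2p + ∑_x χ(-3x² - 4) = 2p - χ(-3) = 2p + 1`.
-/

open Finset

theorem ZMod.sum_range_natCast {M : Type*} [AddCommMonoid M] (n : ℕ) [NeZero n]
    (g : ZMod n → M) : ∑ i ∈ range n, g i = ∑ a : ZMod n, g a :=
  sum_nbij' (↑) ZMod.val (fun _ _ ↦ mem_univ _) (fun a _ ↦ mem_range.mpr a.val_lt)
    (fun _ hi ↦ ZMod.val_natCast_of_lt (mem_range.mp hi)) (fun a _ ↦ ZMod.natCast_zmod_val a)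
    (fun _ _ ↦ rfl)

theorem Nat.coprime_sub_one_three_of_mod_three_eq_two {n : ℕ} (hn : n % 3 = 2) :
    (n - 1).Coprime 3 :=
  ((Nat.Prime.coprime_iff_not_dvd Nat.prime_three).mpr (by omega)).symm

namespace FiniteField

variable {F : Type*} [Field F] [Fintype F]

theorem pow_left_injective_of_coprime {n : ℕ} (hn : n ≠ 0)
    (h : (Fintype.card F - 1).Coprime n) : Function.Injective (fun x : F ↦ x ^ n) := by
  have hunits : Function.Injective (fun u : Fˣ ↦ u ^ n) :=
    (Nat.Coprime.pow_left_bijective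
      (by rwa [Nat.card_units, Nat.card_eq_fintype_card])).injective
  intro a b hab
  simp only at hab
  rcases eq_or_ne a 0 with rfl | ha
  · exact (pow_eq_zero_iff hn).mp (by rw [← hab, zero_pow hn]) |>.symm
  rcases eq_or_ne b 0 with rfl | hb
  · exact (pow_eq_zero_iff hn).mp (by rw [hab, zero_pow hn])
  exact congrArg Units.val
    (@hunits (Units.mk0 a ha) (Units.mk0 b hb) (Units.ext (by simpa using hab)))

theorem not_isSquare_neg_three (hF : ringChar F ≠ 2) (hq : Fintype.card F % 3 = 2) :
    ¬IsSquare (-3 : F) := by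
  rintro ⟨u, hu⟩
  have h2 : (2 : F) ≠ 0 := Ring.two_ne_zero hF
  -- `(u - 1) / 2` would be a primitive cube root of unity, but `Fˣ` has no element of order 3
  set ω := (u - 1) * 2⁻¹
  have hω : ω ^ 2 + ω + 1 = 0 := by
    linear_combination (-2⁻¹ ^ 2 : F) * hu - (u * 2⁻¹ + 2⁻¹ + 1) * mul_inv_cancel₀ h2
  have hω1 : ω = 1 := pow_left_injective_of_coprime three_ne_zero
    (Nat.coprime_sub_one_three_of_mod_three_eq_two hq)
    (show ω ^ 3 = 1 ^ 3 by linear_combination (ω - 1) * hω)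
  have h3 : (3 : F) = 0 := by rw [hω1] at hω; linear_combination hω
  -- `#F = 3k + 2` vanishes in `F`, so `3 = 0` would force `2 = 0`
  have hcard := FiniteField.cast_card_eq_zero F
  rw [← Nat.div_add_mod (Fintype.card F) 3, hq] at hcard
  push_cast at hcard
  exact h2 (by rw [h3] at hcard; simpa using hcard)

end FiniteField

section quadraticChar

variable {F : Type*} [Field F] [Fintype F] [DecidableEq F]

theorem quadraticChar_sum_mul_self :
    ∑ t : F, quadraticChar F (t * t) = (Fintype.card F : ℤ) - 1 := by
  rw [← sum_erase univ (f := fun t : F ↦ quadraticChar F (t * t)) (a := 0) (by simp),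
    sum_congr rfl fun t ht ↦ by rw [← sq, quadraticChar_sq_one' (ne_of_mem_erase ht)]]
  simpa using Nat.cast_pred Fintype.card_pos

variable (hF : ringChar F ≠ 2)
include hF

theorem quadraticChar_sum_add_mul_add (a b : F) :
    ∑ t : F, quadraticChar F ((t + a) * (t + b))
      = if a = b then (Fintype.card F : ℤ) - 1 else -1 := by
  split_ifs with hab
  · subst hab
    exact (Fintype.sum_equiv (Equiv.addRight a) _ (fun t ↦ quadraticChar F (t * t))
      fun _ ↦ rfl).trans quadraticChar_sum_mul_self
  -- substituting `t = (a - b) x - a` turns the sum into `χ (-1)` times the Jacobi sum `J(χ, χ)`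
  have hab' : a - b ≠ 0 := sub_ne_zero.mpr hab
  have hsubst (x : F) : quadraticChar F (((a - b) * x - a + a) * ((a - b) * x - a + b))
      = quadraticChar F (-1) * (quadraticChar F x * (quadraticChar F)⁻¹ (1 - x)) := by
    rw [(quadraticChar_isQuadratic F).inv, ← map_mul, ← map_mul,
      show ((a - b) * x - a + a) * ((a - b) * x - a + b) = (a - b) ^ 2 * (-1 * (x * (1 - x))) by
        ring,
      map_mul, map_pow, quadraticChar_sq_one hab', one_mul]
  have hJ := jacobiSum_nontrivial_inv (quadraticChar_ne_one hF)
  rw [jacobiSum] at hJ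
  rw [← ((Equiv.subRight a).bijective.comp (mulLeft_bijective₀ (a - b) hab')).sum_comp]
  simp only [Function.comp_apply, Equiv.subRight_apply, hsubst, ← mul_sum, hJ]
  rw [mul_neg, ← sq, quadraticChar_sq_one (neg_ne_zero.mpr one_ne_zero)]

theorem quadraticChar_sum_sq_add {d : F} (hd : d ≠ 0) :
    ∑ x : F, quadraticChar F (x ^ 2 + d) = -1 := by
  have hfiber (v : F) : ∑ x with x ^ 2 = v, quadraticChar F (v + d)
      = quadraticChar F ((v + 0) * (v + d)) + quadraticChar F (v + d) := by
    rw [sum_const, nsmul_eq_mul, ← Set.toFinset_ofPred, quadraticChar_card_sqrts hF, add_zero,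
      map_mul, add_one_mul]
  have hshift : ∑ v : F, quadraticChar F (v + d) = 0 :=
    (Fintype.sum_equiv (Equiv.addRight d) _ (quadraticChar F) fun _ ↦ rfl).trans
      (quadraticChar_sum_zero hF)
  rw [← sum_fiberwise' univ (· ^ 2) fun v ↦ quadraticChar F (v + d),
    sum_congr rfl fun v _ ↦ hfiber v, sum_add_distrib, quadraticChar_sum_add_mul_add hF,
    if_neg hd.symm, hshift, add_zero]

theorem quadraticChar_sum_mul_sq_add {a b : F} (ha : a ≠ 0) (hb : b ≠ 0) :
    ∑ x : F, quadraticChar F (a * x ^ 2 + b) = -quadraticChar F a := by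
  have h (x : F) : a * x ^ 2 + b = a * (x ^ 2 + b / a) := by field_simp
  simp only [h, map_mul, ← mul_sum, quadraticChar_sum_sq_add hF (div_ne_zero hb ha), mul_neg_one]

theorem quadraticChar_sum_sq_sum_add (f : F → F) :
    ∑ t : F, (∑ x : F, quadraticChar F (f x + t)) ^ 2
      = Fintype.card F * #{xy : F × F | f xy.1 = f xy.2} - (Fintype.card F : ℤ) ^ 2 := by
  have hexpand (t : F) : (∑ x : F, quadraticChar F (f x + t)) ^ 2
      = ∑ x : F, ∑ y : F, quadraticChar F ((t + f x) * (t + f y)) := by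
    simp only [sq, sum_mul_sum, ← map_mul, add_comm t]
  have hinner (x y : F) : ∑ t : F, quadraticChar F ((t + f x) * (t + f y))
      = Fintype.card F * (if f x = f y then 1 else 0) - 1 := by
    rw [quadraticChar_sum_add_mul_add hF]
    split_ifs <;> ring
  rw [sum_congr rfl fun t _ ↦ hexpand t, sum_comm, sum_congr rfl fun x _ ↦ sum_comm]
  simp only [hinner]
  rw [natCast_card_filter, Fintype.sum_prod_type]
  simp only [sum_sub_distrib, ← mul_sum, sum_const, card_univ, nsmul_eq_mul]
  ring

end quadraticChar

section CubePlusLinear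

variable {F : Type*} [Field F] [Fintype F] [DecidableEq F] (hF : ringChar F ≠ 2)
  (h3 : ¬IsSquare (-3 : F))
include hF h3

theorem card_filter_cube_add_self_eq (x : F) :
    (#{y | x ^ 3 + x = y ^ 3 + y} : ℤ) = 2 + quadraticChar F (-3 * x ^ 2 - 4) := by
  have h2 : (2 : F) ≠ 0 := Ring.two_ne_zero hF
  have h4 : (4 : F) ≠ 0 := fun h ↦ h3 ⟨1, by linear_combination -h⟩
  -- `4 (y³ + y - (x³ + x)) = (y - x) ((2y + x)² + 3x² + 4)`
  have hsplit : filter (fun y ↦ x ^ 3 + x = y ^ 3 + y) univ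
      = insert x (filter (fun y ↦ (2 * y + x) ^ 2 = -3 * x ^ 2 - 4) univ) := by
    ext y
    simp only [mem_filter_univ, mem_insert]
    constructor
    · intro h
      have : (y - x) * ((2 * y + x) ^ 2 - (-3 * x ^ 2 - 4)) = 0 := by linear_combination -4 * h
      rcases mul_eq_zero.mp this with h | h
      · exact .inl (sub_eq_zero.mp h)
      · exact .inr (sub_eq_zero.mp h)
    · rintro (rfl | h)
      · rfl
      · refine mul_left_cancel₀ h4 ?_
        linear_combination (x - y) * h
  have hdisj : x ∉ filter (fun y ↦ (2 * y + x) ^ 2 = -3 * x ^ 2 - 4) univ := by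
    rw [mem_filter_univ]
    intro h
    refine h3 ⟨3 * x, mul_left_cancel₀ h4 ?_⟩
    linear_combination -3 * h
  have hsqrts : (#{y | (2 * y + x) ^ 2 = -3 * x ^ 2 - 4} : ℤ)
      = quadraticChar F (-3 * x ^ 2 - 4) + 1 := by
    rw [← quadraticChar_card_sqrts hF, Set.toFinset_ofPred, natCast_card_filter,
      natCast_card_filter]
    exact Fintype.sum_bijective _ ((Equiv.addRight x).bijective.comp (mulLeft_bijective₀ 2 h2))
      _ _ fun _ ↦ rfl
  rw [hsplit, card_insert_of_notMem hdisj]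
  push_cast
  rw [hsqrts]
  ring

theorem card_filter_prod_cube_add_self_eq :
    #{xy : F × F | xy.1 ^ 3 + xy.1 = xy.2 ^ 3 + xy.2} = 2 * Fintype.card F + 1 := by
  have h3' : (3 : F) ≠ 0 := fun h ↦ h3 ⟨0, by simp [h]⟩
  have hχ : quadraticChar F (-3) = -1 := quadraticChar_neg_one_iff_not_isSquare.mpr h3
  have hcount : (#{xy : F × F | xy.1 ^ 3 + xy.1 = xy.2 ^ 3 + xy.2} : ℤ)
      = ∑ x : F, (#{y | x ^ 3 + x = y ^ 3 + y} : ℤ) := by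
    simp only [natCast_card_filter, Fintype.sum_prod_type]
  have h4 : (4 : F) ≠ 0 := fun h ↦ h3 ⟨1, by linear_combination -h⟩
  have hsum := quadraticChar_sum_mul_sq_add hF (neg_ne_zero.mpr h3') (neg_ne_zero.mpr h4)
  simp only [← sub_eq_add_neg, hχ, neg_neg] at hsum
  zify
  rw [hcount, sum_congr rfl fun x _ ↦ card_filter_cube_add_self_eq hF h3 x, sum_add_distrib,
    hsum, sum_const, card_univ, nsmul_eq_mul]
  ring

end CubePlusLinear

/-- For an odd prime `p ≡ 2 (mod 3)`, the second moment of the family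
`y² = x³ + x + T³` equals `p² + p`. -/
theorem second_moment_x_cubed_plus_x_plus_Tcubed (p : ℕ) [Fact p.Prime] (hodd : p ≠ 2)
    (hp3 : p % 3 = 2) :
    ∑ t ∈ Finset.range p,
        (∑ x ∈ Finset.range p, legendreSym p ((x : ℤ) ^ 3 + (x : ℤ) + (t : ℤ) ^ 3)) ^ 2
      = (p : ℤ) ^ 2 + p := by
  have hF : ringChar (ZMod p) ≠ 2 := by rwa [ZMod.ringChar_zmod_n]
  have hq : Fintype.card (ZMod p) % 3 = 2 := by rwa [ZMod.card]
  have hcube : Function.Bijective fun t : ZMod p ↦ t ^ 3 :=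
    Finite.injective_iff_bijective.mp <| FiniteField.pow_left_injective_of_coprime three_ne_zero
      (Nat.coprime_sub_one_three_of_mod_three_eq_two hq)
  have hlegendre (x t : ℕ) : legendreSym p ((x : ℤ) ^ 3 + x + (t : ℤ) ^ 3)
      = quadraticChar (ZMod p) ((x : ZMod p) ^ 3 + x + (t : ZMod p) ^ 3) := by
    simp [legendreSym]
  have hinner (t : ZMod p) :
      ∑ x ∈ range p, quadraticChar (ZMod p) ((x : ZMod p) ^ 3 + x + t ^ 3)
        = ∑ x : ZMod p, quadraticChar (ZMod p) (x ^ 3 + x + t ^ 3) :=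
    ZMod.sum_range_natCast p fun x ↦ quadraticChar (ZMod p) (x ^ 3 + x + t ^ 3)
  simp only [hlegendre, hinner]
  rw [ZMod.sum_range_natCast p fun t ↦
      (∑ x : ZMod p, quadraticChar (ZMod p) (x ^ 3 + x + t ^ 3)) ^ 2,
    hcube.sum_comp fun t ↦ (∑ x : ZMod p, quadraticChar (ZMod p) (x ^ 3 + x + t)) ^ 2,
    quadraticChar_sum_sq_sum_add hF fun x ↦ x ^ 3 + x,
    card_filter_prod_cube_add_self_eq hF (FiniteField.not_isSquare_neg_three hF hq), ZMod.card]
  push_cast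
  ring
end

section
/- Let δ be a real-valued function on the primes and suppose there is a constant C with |δ(p)| ≤ C for all primes p. Then (1/π(x)) · Σ_{p ≤ x, p prime} δ(p)·p^{−1/2} tends to 0 as x → ∞, where π(x) denotes the number of primes at most x. -/
/-!
Enumerating the primes as `p₀ < p₁ < ⋯`, the sum over `p ≤ x` is the partial sum over `k < π(x)`
of `δ(p_k) p_k^{-1/2}`. This sequence tends to `0` (bounded times `p_k^{-1/2} → 0`), so its Cesàro
means tend to `0`, and `π(x) → ∞` lets us evaluate them along `π(x)`.
-/

open Filter Finset Topology

namespace Nat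

variable {p : ℕ → Prop}

theorem filter_range_eq_image_nth_range_count [DecidablePred p] (hp : (Set.ofPred p).Infinite)
    (n : ℕ) :
    (range n).filter p = (range (count p n)).image (nth p) := by
  ext a
  simp only [mem_filter, mem_image, mem_range]
  constructor
  · rintro ⟨ha, hpa⟩
    exact ⟨count p a, count_strict_mono hpa ha, nth_count hpa⟩
  · rintro ⟨i, hi, rfl⟩
    exact ⟨nth_lt_of_lt_count hi, nth_mem_of_infinite hp i⟩

theorem sum_filter_range_eq_sum_range_count [DecidablePred p] {M : Type*} [AddCommMonoid M]
    (hp : (Set.ofPred p).Infinite) (f : ℕ → M) (n : ℕ) :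
    ∑ k ∈ (range n).filter p, f k = ∑ i ∈ range (count p n), f (nth p i) := by
  rw [filter_range_eq_image_nth_range_count hp,
    sum_image fun _ _ _ _ h => nth_injective hp h]

theorem tendsto_count_atTop [DecidablePred p] (hp : (Set.ofPred p).Infinite) :
    Tendsto (count p) atTop atTop :=
  tendsto_atTop_atTop_of_monotone (count_monotone p) fun k =>
    ⟨nth p k, (count_nth_of_infinite hp k).ge⟩

theorem tendsto_count_inv_mul_sum_filter_range [DecidablePred p] (hp : (Set.ofPred p).Infinite)
    {f : ℕ → ℝ} {l : ℝ} (hf : Tendsto (fun i => f (nth p i)) atTop (𝓝 l)) :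
    Tendsto (fun n => (count p n : ℝ)⁻¹ * ∑ k ∈ (range n).filter p, f k) atTop (𝓝 l) := by
  refine (hf.cesaro.comp (tendsto_count_atTop hp)).congr fun n => ?_
  simp only [Function.comp_apply, sum_filter_range_eq_sum_range_count hp]

theorem tendsto_mul_nth_rpow_neg_of_bounded (hp : (Set.ofPred p).Infinite) {δ : ℕ → ℝ} {C : ℝ}
    (hC : ∀ k, p k → |δ k| ≤ C) {s : ℝ} (hs : 0 < s) :
    Tendsto (fun i => δ (nth p i) * (nth p i : ℝ) ^ (-s)) atTop (𝓝 0) := by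
  have hrpow : Tendsto (fun i => (nth p i : ℝ) ^ (-s)) atTop (𝓝 0) :=
    (tendsto_rpow_neg_atTop hs).comp
      (tendsto_natCast_atTop_atTop.comp (nth_strictMono hp).tendsto_atTop)
  refine isBoundedUnder_le_mul_tendsto_zero ?_ hrpow
  exact isBoundedUnder_of ⟨C, fun i => hC _ (nth_mem_of_infinite hp i)⟩

end Nat

/-- If `δ` is a real-valued function bounded by `C` on the primes, then
`(1/π(x)) · ∑_{p ≤ x, p prime} δ(p)·p^{−1/2} → 0` as `x → ∞`. -/
theorem average_of_bounded_over_sqrt_tendsto_zero (δ : ℕ → ℝ) (C : ℝ)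
    (hC : ∀ p : ℕ, p.Prime → |δ p| ≤ C) :
    Filter.Tendsto
      (fun x : ℕ =>
        (1 / (Nat.primeCounting x : ℝ)) *
          ∑ p ∈ (Finset.range (x + 1)).filter Nat.Prime,
            δ p * (p : ℝ) ^ (-(1 / 2 : ℝ)))
      Filter.atTop (nhds 0) := by
  have hsqrt := Nat.tendsto_mul_nth_rpow_neg_of_bounded Nat.infinite_setOfPred_prime hC
    (one_half_pos (α := ℝ))
  have hmean := Nat.tendsto_count_inv_mul_sum_filter_range Nat.infinite_setOfPred_prime
    (f := fun p => δ p * (p : ℝ) ^ (-(1 / 2 : ℝ))) hsqrt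
  simpa only [one_div, Nat.primeCounting, Nat.primeCounting', Function.comp_def] using
    hmean.comp (tendsto_add_atTop_nat 1)
end
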